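/- arXiv:math/0109156 — 4 statements merged into one kernel-verified Lean document; each statement's English description precedes it below -/
import Mathlib

section
/- Pointwise density-score bound for normal perturbations: if S is a real random variable and X = S + Z where Z ~ N(0,τ) is independent of S, then for every integer k ≥ 1 and all x, p_X(x)|ρ_X(x)|^k ≤ c_{τ,k}·p_U(x), where c_{τ,k} = √2·(2k/(τe))^{k/2}, p_X is the density of X with score ρ_X, and p_U is the density of U = S + Z' with Z' ~ N(0,2τ) independent of S. -/
/-! Write `g = gauss τ (x - ·)` and `h = |x - ·| / τ`. The triangle inequality gives
`|p'_X(x)| ≤ ∫ h g dμ`, and Jensen's inequality for the probability weights `g dμ / p_X(x)` gives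
`p_X(x) |ρ_X(x)|^k ≤ ∫ h^k g dμ`. Pointwise, `(|u|/τ)^k φ_τ(u) ≤ c_{τ,k} φ_{2τ}(u)` because
`φ_τ(u) = √2 φ_{2τ}(u) e^{-u²/(4τ)}` and `t^k e^{-t} ≤ (k/e)^k`; integrating against `μ`
turns `φ_{2τ}(x - ·)` into `p_U(x)`. -/

open MeasureTheory Real

/-- The centered Gaussian density with variance `t`. -/
noncomputable def gauss (t x : ℝ) : ℝ := (Real.sqrt (2 * Real.pi * t))⁻¹ * Real.exp (-(x ^ 2) / (2 * t))

/-- Jensen's inequality for `t ↦ t ^ k` and the weights `g dμ / ∫ g dμ`. -/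
theorem integral_mul_div_pow_le {α : Type*} [MeasurableSpace α] {μ : Measure α} {g h : α → ℝ}
    (hg : ∀ s, 0 ≤ g s) (hh : ∀ s, 0 ≤ h s) (k : ℕ) (hg_int : Integrable g μ)
    (hhg_int : Integrable (fun s => h s * g s) μ)
    (hhkg_int : Integrable (fun s => h s ^ k * g s) μ) :
    (∫ s, g s ∂μ) * ((∫ s, h s * g s ∂μ) / ∫ s, g s ∂μ) ^ k ≤ ∫ s, h s ^ k * g s ∂μ := by
  set P := ∫ s, g s ∂μ
  set m := (∫ s, h s * g s ∂μ) / P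
  rcases eq_or_ne P 0 with hP | hP
  · rw [hP, zero_mul]
    exact integral_nonneg fun s => mul_nonneg (pow_nonneg (hh s) k) (hg s)
  have hm : 0 ≤ m := div_nonneg (integral_nonneg fun s => mul_nonneg (hh s) (hg s))
    (integral_nonneg hg)
  -- integrate the tangent line of `t ↦ t ^ k` at the mean `m`; its linear term integrates to `0`
  have tangent : ∀ s, m ^ k * g s + k * m ^ (k - 1) * (h s * g s - m * g s) ≤ h s ^ k * g s :=
    fun s => by
      have := pow_add_mul_le_add_pow hm (by linarith [hh s]) k (b := h s - m)
      rw [add_sub_cancel] at this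
      calc _ = (m ^ k + k * m ^ (k - 1) * (h s - m)) * g s := by ring
        _ ≤ h s ^ k * g s := mul_le_mul_of_nonneg_right this (hg s)
  have hdev_int : Integrable (fun s => h s * g s - m * g s) μ := hhg_int.sub (hg_int.const_mul m)
  calc P * m ^ k
      = ∫ s, m ^ k * g s + k * m ^ (k - 1) * (h s * g s - m * g s) ∂μ := by
        rw [integral_add (hg_int.const_mul _) (hdev_int.const_mul _), integral_const_mul,
          integral_const_mul, integral_sub hhg_int (hg_int.const_mul m), integral_const_mul,
          div_mul_cancel₀ _ hP, sub_self, mul_zero, add_zero, mul_comm]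
    _ ≤ ∫ s, h s ^ k * g s ∂μ :=
        integral_mono ((hg_int.const_mul _).add (hdev_int.const_mul _)) hhkg_int tangent

theorem pow_mul_exp_neg_le (k : ℕ) {t : ℝ} (ht : 0 ≤ t) : t ^ k * exp (-t) ≤ (k / exp 1) ^ k := by
  rcases Nat.eq_zero_or_pos k with rfl | hk
  · simpa using exp_le_one_iff.2 (neg_nonpos.2 ht)
  have hk' : (0 : ℝ) < k := by exact_mod_cast hk
  calc t ^ k * exp (-t) = (k * (t / k * exp (-(t / k)))) ^ k := by
        rw [mul_pow, mul_pow, ← exp_nat_mul, mul_neg, mul_div_cancel₀ _ hk'.ne', ← mul_assoc,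
          ← mul_pow, mul_div_cancel₀ _ hk'.ne']
    _ ≤ (k * exp (-1)) ^ k := by
        have : 0 ≤ t / k * exp (-(t / k)) := by positivity
        gcongr
        exact mul_exp_neg_le_exp_neg_one _
    _ = (k / exp 1) ^ k := by rw [exp_neg, div_eq_mul_inv]

theorem abs_div_pow_mul_exp_le {τ : ℝ} (hτ : 0 < τ) (k : ℕ) (u : ℝ) :
    (|u| / τ) ^ k * exp (-(u ^ 2) / (4 * τ)) ≤ (2 * k / (τ * exp 1)) ^ ((k : ℝ) / 2) := by
  rw [← pow_le_pow_iff_left₀ (by positivity) (by positivity) two_ne_zero,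
    ← rpow_mul_natCast (by positivity), Nat.cast_ofNat, div_mul_cancel₀ _ two_ne_zero, rpow_natCast]
  calc ((|u| / τ) ^ k * exp (-(u ^ 2) / (4 * τ))) ^ 2
      = (2 / τ) ^ k * ((u ^ 2 / (2 * τ)) ^ k * exp (-(u ^ 2 / (2 * τ)))) := by
        rw [mul_pow, ← exp_nat_mul, ← pow_mul, mul_comm k, pow_mul, div_pow, sq_abs, ← mul_assoc,
          ← mul_pow]
        congr 2
        · field_simp
        · push_cast; field_simp; ring
    _ ≤ (2 / τ) ^ k * (k / exp 1) ^ k := by gcongr; exact pow_mul_exp_neg_le k (by positivity)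
    _ = (2 * k / (τ * exp 1)) ^ k := by rw [← mul_pow]; congr 1; field_simp

section Gauss

variable {t : ℝ}

theorem gauss_pos (ht : 0 < t) (x : ℝ) : 0 < gauss t x := by
  unfold gauss
  positivity

theorem gauss_le_inv_sqrt (ht : 0 < t) (x : ℝ) : gauss t x ≤ (√(2 * π * t))⁻¹ := by
  unfold gauss
  exact mul_le_of_le_one_right (by positivity)
    (exp_le_one_iff.2 (div_nonpos_of_nonpos_of_nonneg (neg_nonpos.2 (sq_nonneg x)) (by positivity)))

@[fun_prop]
theorem continuous_gauss (t : ℝ) : Continuous (gauss t) := by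
  unfold gauss
  fun_prop

theorem gauss_eq_sqrt_two_mul_gauss_two_mul (ht : 0 < t) (u : ℝ) :
    gauss t u = √2 * gauss (2 * t) u * exp (-(u ^ 2) / (4 * t)) := by
  unfold gauss
  rw [show 2 * π * (2 * t) = 2 * (2 * π * t) by ring, sqrt_mul zero_le_two,
    show -(u ^ 2) / (2 * t) = -(u ^ 2) / (2 * (2 * t)) + -(u ^ 2) / (4 * t) by field_simp; ring,
    exp_add]
  field_simp

theorem abs_div_pow_mul_gauss_le (ht : 0 < t) (k : ℕ) (u : ℝ) :
    (|u| / t) ^ k * gauss t u ≤ √2 * (2 * k / (t * exp 1)) ^ ((k : ℝ) / 2) * gauss (2 * t) u := by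
  rw [gauss_eq_sqrt_two_mul_gauss_two_mul ht]
  calc (|u| / t) ^ k * (√2 * gauss (2 * t) u * exp (-(u ^ 2) / (4 * t)))
      = √2 * ((|u| / t) ^ k * exp (-(u ^ 2) / (4 * t))) * gauss (2 * t) u := by ring
    _ ≤ √2 * (2 * k / (t * exp 1)) ^ ((k : ℝ) / 2) * gauss (2 * t) u := by
        have := gauss_pos (by positivity : 0 < 2 * t) u
        gcongr
        exact abs_div_pow_mul_exp_le ht k u

variable {μ : Measure ℝ} [IsFiniteMeasure μ]

theorem integrable_gauss_sub (ht : 0 < t) (x : ℝ) : Integrable (fun s => gauss t (x - s)) μ :=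
  .of_bound (Continuous.aestronglyMeasurable (by fun_prop)) (√(2 * π * t))⁻¹
    (ae_of_all _ fun s => by
      rw [norm_of_nonneg (gauss_pos ht _).le]
      exact gauss_le_inv_sqrt ht _)

theorem integrable_abs_sub_div_pow_mul_gauss_sub (ht : 0 < t) (k : ℕ) (x : ℝ) :
    Integrable (fun s => (|x - s| / t) ^ k * gauss t (x - s)) μ :=
  ((integrable_gauss_sub (t := 2 * t) (by positivity) x).const_mul _).mono'
    (Continuous.aestronglyMeasurable (by fun_prop))
    (ae_of_all _ fun s => by
      rw [norm_of_nonneg (mul_nonneg (by positivity) (gauss_pos ht _).le)]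
      exact abs_div_pow_mul_gauss_le ht k _)

end Gauss

theorem stmt4_general (μ : Measure ℝ) [IsProbabilityMeasure μ] (τ : ℝ) (hτ : 0 < τ)
    (k : ℕ) (pX p'X pU : ℝ → ℝ)
    (hpX : ∀ x, pX x = ∫ s, gauss τ (x - s) ∂μ)
    (hp'X : ∀ x, p'X x = ∫ s, -((x - s) / τ) * gauss τ (x - s) ∂μ)
    (hpU : ∀ x, pU x = ∫ s, gauss (2 * τ) (x - s) ∂μ) :
    ∀ x, pX x * |p'X x / pX x| ^ k
      ≤ Real.sqrt 2 * (2 * k / (τ * Real.exp 1)) ^ ((k : ℝ) / 2) * pU x := by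
  intro x
  have hg : ∀ s, 0 ≤ gauss τ (x - s) := fun s => (gauss_pos hτ _).le
  have hpX_nonneg : 0 ≤ pX x := hpX x ▸ integral_nonneg hg
  have hscore : |p'X x| ≤ ∫ s, |x - s| / τ * gauss τ (x - s) ∂μ := by
    rw [hp'X x, ← norm_eq_abs]
    refine (norm_integral_le_integral_norm _).trans_eq (integral_congr_ae (ae_of_all _ fun s => ?_))
    simp only [norm_mul, norm_neg, norm_div, norm_eq_abs, abs_of_pos hτ, abs_of_nonneg (hg s)]
  calc pX x * |p'X x / pX x| ^ k
      ≤ pX x * ((∫ s, |x - s| / τ * gauss τ (x - s) ∂μ) / pX x) ^ k := by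
        rw [abs_div, abs_of_nonneg hpX_nonneg]
        gcongr
    _ ≤ ∫ s, (|x - s| / τ) ^ k * gauss τ (x - s) ∂μ := by
        rw [hpX x]
        exact integral_mul_div_pow_le hg (fun s => by positivity) k (integrable_gauss_sub hτ x)
          (by simpa using integrable_abs_sub_div_pow_mul_gauss_sub hτ 1 x)
          (integrable_abs_sub_div_pow_mul_gauss_sub hτ k x)
    _ ≤ ∫ s, √2 * (2 * k / (τ * exp 1)) ^ ((k : ℝ) / 2) * gauss (2 * τ) (x - s) ∂μ :=
        integral_mono (integrable_abs_sub_div_pow_mul_gauss_sub hτ k x)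
          ((integrable_gauss_sub (by positivity) x).const_mul _)
          fun s => abs_div_pow_mul_gauss_le hτ k (x - s)
    _ = √2 * (2 * k / (τ * exp 1)) ^ ((k : ℝ) / 2) * pU x := by rw [integral_const_mul, hpU x]

/-- Pointwise density-score bound for normal perturbations:
`p_X(x) |ρ_X(x)|^k ≤ c_{τ,k} p_U(x)` with `c_{τ,k} = √2 (2k/(τe))^{k/2}`. -/
theorem stmt4 (μ : Measure ℝ) [IsProbabilityMeasure μ] (τ : ℝ) (hτ : 0 < τ)
    (k : ℕ) (hk : 1 ≤ k) (pX p'X pU : ℝ → ℝ)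
    (hpX : ∀ x, pX x = ∫ s, gauss τ (x - s) ∂μ)
    (hp'X : ∀ x, p'X x = ∫ s, -((x - s) / τ) * gauss τ (x - s) ∂μ)
    (hpU : ∀ x, pU x = ∫ s, gauss (2 * τ) (x - s) ∂μ) :
    ∀ x, pX x * |p'X x / pX x| ^ k
      ≤ Real.sqrt 2 * (2 * k / (τ * Real.exp 1)) ^ ((k : ℝ) / 2) * pU x :=
  stmt4_general μ τ hτ k pX p'X pU hpX hp'X hpU
end

section
/- Local L² growth bound for score functions: if S has mean zero and variance at most K, and X = S + Z with Z ~ N(0,τ) independent of S, then for every B > 1, ∫_{−B√τ}^{B√τ} ρ(u)² du ≤ (8B³/(√τ·e))·(3 + 2K/τ), where ρ is the score function of X. -/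
/-!
With `G(x) = exp (-x² / (2τ))`, the score at `u` is `ρ(u) = -E[(u - S) G(u - S)] / (τ E[G(u - S)])`.
Jensen's inequality for `exp` and `E S = 0` give
`E[G(u - S)] ≥ exp (-(u² + E S²) / (2τ)) ≥ exp (-A/2)` with `A = B² + K/τ` whenever `|u| ≤ B√τ`.
Spending a fraction `1/A` of the Gaussian exponent on the factor `|x|` gives
`|x| G(x) ≤ √(Aτ/e) G(x)^(1 - 1/A)`, and Jensen's inequality for the concave power then gives
`E[|u - S| G(u - S)] ≤ √(Aτ/e) (E G)^(1 - 1/A) ≤ √(Aτ) E G`. Hence `ρ(u)² ≤ A/τ` on the interval,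
whose length is `2B√τ`.
-/

open MeasureTheory Real

lemma abs_mul_exp_neg_sq_div_le_sqrt {σ : ℝ} (hσ : 0 < σ) (x : ℝ) :
    |x| * exp (-x ^ 2 / (2 * σ)) ≤ √(σ / exp 1) := by
  rw [Real.le_sqrt (by positivity) (by positivity), mul_pow, sq_abs, ← exp_nat_mul]
  calc x ^ 2 * exp (2 * (-x ^ 2 / (2 * σ))) = σ * (x ^ 2 / σ * exp (-(x ^ 2 / σ))) := by
        field_simp
    _ ≤ σ * exp (-1) := by gcongr; exact mul_exp_neg_le_exp_neg_one _
    _ = σ / exp 1 := by rw [exp_neg, div_eq_mul_inv]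

lemma abs_mul_exp_neg_sq_div_le_rpow {τ A : ℝ} (hτ : 0 < τ) (hA : 0 < A) (x : ℝ) :
    |x| * exp (-x ^ 2 / (2 * τ)) ≤ √(A * τ / exp 1) * exp (-x ^ 2 / (2 * τ)) ^ (1 - A⁻¹) := by
  have hsplit : exp (-x ^ 2 / (2 * τ))
      = exp (-x ^ 2 / (2 * (A * τ))) * exp (-x ^ 2 / (2 * τ)) ^ (1 - A⁻¹) := by
    rw [← exp_mul, ← exp_add]
    congr 1
    field_simp
    ring
  nth_rw 1 [hsplit]
  rw [← mul_assoc]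
  exact mul_le_mul_of_nonneg_right (abs_mul_exp_neg_sq_div_le_sqrt (by positivity) x)
    (by positivity)

lemma exp_neg_sq_div_le_one {τ : ℝ} (hτ : 0 ≤ τ) (x : ℝ) : exp (-x ^ 2 / (2 * τ)) ≤ 1 :=
  exp_le_one_iff.2 (div_nonpos_of_nonpos_of_nonneg (neg_nonpos.2 (sq_nonneg x)) (by positivity))

section ProbabilitySpace

variable {Ω : Type*} [MeasurableSpace Ω] {μ : Measure Ω}

lemma integrable_exp_neg_sq_div [IsFiniteMeasure μ] {X : Ω → ℝ} {τ : ℝ} (hτ : 0 ≤ τ)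
    (hX : AEStronglyMeasurable X μ) : Integrable (fun ω => exp (-X ω ^ 2 / (2 * τ))) μ :=
  .mono' (integrable_const 1) (by fun_prop) (.of_forall fun ω => by
    rw [norm_of_nonneg (exp_nonneg _)]; exact exp_neg_sq_div_le_one hτ (X ω))

variable [IsProbabilityMeasure μ]

lemma integral_rpow_le_rpow_integral {f : Ω → ℝ} {r : ℝ} (hr₀ : 0 ≤ r) (hr₁ : r ≤ 1)
    (hf₀ : ∀ x, 0 ≤ f x) (hf : Integrable f μ) (hfr : Integrable (fun x => f x ^ r) μ) :
    ∫ x, f x ^ r ∂μ ≤ (∫ x, f x ∂μ) ^ r :=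
  (concaveOn_rpow hr₀ hr₁).le_map_integral (continuous_rpow_const hr₀).continuousOn
    isClosed_Ici (.of_forall hf₀) hf hfr

lemma exp_neg_integral_sq_div_le {X : Ω → ℝ} {τ : ℝ} (hτ : 0 ≤ τ) (hX : AEStronglyMeasurable X μ)
    (hX2 : Integrable (fun ω => X ω ^ 2) μ) :
    exp (-(∫ ω, X ω ^ 2 ∂μ) / (2 * τ)) ≤ ∫ ω, exp (-X ω ^ 2 / (2 * τ)) ∂μ := by
  have h := convexOn_exp.map_integral_le continuous_exp.continuousOn isClosed_univ
    (.of_forall fun ω => Set.mem_univ (-X ω ^ 2 / (2 * τ))) ((hX2.neg).div_const _)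
    (integrable_exp_neg_sq_div hτ hX)
  rwa [integral_div, integral_neg] at h

lemma integral_abs_mul_exp_neg_sq_div_le {X : Ω → ℝ} {τ A : ℝ} (hτ : 0 < τ) (hA : 1 ≤ A)
    (hX : AEStronglyMeasurable X μ)
    (hI : exp (-A / 2) ≤ ∫ ω, exp (-X ω ^ 2 / (2 * τ)) ∂μ) :
    ∫ ω, |X ω| * exp (-X ω ^ 2 / (2 * τ)) ∂μ ≤ √(A * τ) * ∫ ω, exp (-X ω ^ 2 / (2 * τ)) ∂μ := by
  set G : Ω → ℝ := fun ω => exp (-X ω ^ 2 / (2 * τ))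
  set I := ∫ ω, G ω ∂μ
  set r := 1 - A⁻¹
  have hr₀ : 0 ≤ r := sub_nonneg.2 (inv_le_one_of_one_le₀ hA)
  have hr₁ : r ≤ 1 := sub_le_self _ (by positivity)
  have hG₀ : ∀ ω, 0 ≤ G ω := fun ω => (exp_pos _).le
  have hG₁ : ∀ ω, G ω ≤ 1 := fun ω => exp_neg_sq_div_le_one hτ.le (X ω)
  have hGint : Integrable G μ := integrable_exp_neg_sq_div hτ.le hX
  have hGrint : Integrable (fun ω => G ω ^ r) μ := by
    refine .mono' (integrable_const 1)
      (hGint.aemeasurable.pow_const r).aestronglyMeasurable (.of_forall fun ω => ?_)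
    rw [norm_of_nonneg (rpow_nonneg (hG₀ ω) r)]
    exact rpow_le_one (hG₀ ω) (hG₁ ω) hr₀
  have hIpos : 0 < I := (exp_pos _).trans_le hI
  have hIr : I ^ r ≤ exp (1 / 2) * I := by
    calc I ^ r = I * I ^ (-A⁻¹) := by
          rw [rpow_sub hIpos, rpow_one, rpow_neg hIpos.le, div_eq_mul_inv]
      _ ≤ I * exp (-A / 2) ^ (-A⁻¹) := mul_le_mul_of_nonneg_left
          (rpow_le_rpow_of_nonpos (exp_pos _) hI (neg_nonpos.2 (by positivity))) hIpos.le
      _ = exp (1 / 2) * I := by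
          rw [← exp_mul, mul_comm]
          congr 2
          field_simp
  calc ∫ ω, |X ω| * G ω ∂μ ≤ ∫ ω, √(A * τ / exp 1) * G ω ^ r ∂μ :=
        integral_mono_of_nonneg (.of_forall fun ω => mul_nonneg (abs_nonneg _) (hG₀ ω))
          (hGrint.const_mul _)
          (.of_forall fun ω => abs_mul_exp_neg_sq_div_le_rpow hτ (by linarith) (X ω))
    _ = √(A * τ / exp 1) * ∫ ω, G ω ^ r ∂μ := integral_const_mul _ _
    _ ≤ √(A * τ / exp 1) * (exp (1 / 2) * I) := by
        gcongr
        exact (integral_rpow_le_rpow_integral hr₀ hr₁ hG₀ hGint hGrint).trans hIr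
    _ = √(A * τ) * I := by
        rw [← mul_assoc, exp_half, ← sqrt_mul (by positivity), div_mul_cancel₀ _ (exp_pos 1).ne']

end ProbabilitySpace

lemma integrable_sub_sq {μ : Measure ℝ} [IsFiniteMeasure μ] (hint : Integrable (fun s => s) μ)
    (hint2 : Integrable (fun s => s ^ 2) μ) (u : ℝ) : Integrable (fun s => (u - s) ^ 2) μ := by
  simp_rw [sub_sq']
  exact ((integrable_const _).add hint2).sub (hint.const_mul _)

lemma integral_sub_sq {μ : Measure ℝ} [IsProbabilityMeasure μ] (hint : Integrable (fun s => s) μ)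
    (hint2 : Integrable (fun s => s ^ 2) μ) (hmean : ∫ s, s ∂μ = 0) (u : ℝ) :
    ∫ s, (u - s) ^ 2 ∂μ = u ^ 2 + ∫ s, s ^ 2 ∂μ := by
  simp_rw [sub_sq']
  rw [integral_sub (f := fun s => u ^ 2 + s ^ 2) ((integrable_const _).add hint2)
    (hint.const_mul _), integral_add (integrable_const _) hint2, integral_const_mul, hmean]
  simp

lemma score_sq_le {μ : Measure ℝ} [IsProbabilityMeasure μ] {τ A u : ℝ} (hτ : 0 < τ) (hA : 1 ≤ A)
    (hint : Integrable (fun s => s) μ) (hint2 : Integrable (fun s => s ^ 2) μ)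
    (hmean : ∫ s, s ∂μ = 0) (hu : u ^ 2 + ∫ s, s ^ 2 ∂μ ≤ A * τ) :
    ((∫ s, -((u - s) / τ) * gauss τ (u - s) ∂μ) / ∫ s, gauss τ (u - s) ∂μ) ^ 2 ≤ A / τ := by
  set c := (√(2 * π * τ))⁻¹
  set G : ℝ → ℝ := fun s => exp (-(u - s) ^ 2 / (2 * τ))
  set I := ∫ s, G s ∂μ
  have hc : 0 < c := by positivity
  have hI : exp (-A / 2) ≤ I := by
    refine le_trans ?_ (exp_neg_integral_sq_div_le hτ.le (X := fun s => u - s) (by fun_prop)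
      (integrable_sub_sq hint hint2 u))
    rw [integral_sub_sq hint hint2 hmean u, exp_le_exp, div_le_div_iff₀ two_pos (by positivity)]
    linarith
  have hIpos : 0 < I := (exp_pos _).trans_le hI
  have hp : ∫ s, gauss τ (u - s) ∂μ = c * I := integral_const_mul _ _
  have hp' : |∫ s, -((u - s) / τ) * gauss τ (u - s) ∂μ| ≤ c / τ * (√(A * τ) * I) :=
    calc |∫ s, -((u - s) / τ) * gauss τ (u - s) ∂μ|
        ≤ ∫ s, c / τ * (|u - s| * G s) ∂μ := by
          refine abs_integral_le_integral_abs.trans_eq (integral_congr_ae (.of_forall fun s => ?_))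
          simp only [gauss, abs_mul, abs_neg, abs_div, abs_of_pos hτ, abs_of_pos hc,
            abs_of_pos (exp_pos _), G, c]
          ring
      _ = c / τ * ∫ s, |u - s| * G s ∂μ := integral_const_mul _ _
      _ ≤ c / τ * (√(A * τ) * I) := by
          gcongr
          exact integral_abs_mul_exp_neg_sq_div_le hτ hA (by fun_prop) hI
  rw [hp, div_pow, div_le_iff₀ (by positivity), ← sq_abs]
  calc |∫ s, -((u - s) / τ) * gauss τ (u - s) ∂μ| ^ 2 ≤ (c / τ * (√(A * τ) * I)) ^ 2 := by
        gcongr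
    _ = A / τ * (c * I) ^ 2 := by
        rw [mul_pow, mul_pow, sq_sqrt (by positivity)]
        field_simp

lemma score_bound_mul_width_le {τ K B : ℝ} (hτ : 0 < τ) (hK : 0 ≤ K) (hB : 1 < B) :
    (B ^ 2 + K / τ) / τ * |B * √τ - -(B * √τ)| ≤ 8 * B ^ 3 / (√τ * exp 1) * (3 + 2 * K / τ) := by
  have hB0 : 0 < B := one_pos.trans hB
  have hsqrt : 0 < √τ := sqrt_pos.2 hτ
  have hk : 0 ≤ K / τ := div_nonneg hK hτ.le
  have he : exp 1 < 3 := exp_one_lt_d9.trans (by norm_num)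
  have hwidth : (B ^ 2 + K / τ) / τ * |B * √τ - -(B * √τ)| = 2 * B * (B ^ 2 + K / τ) / √τ := by
    rw [abs_of_pos (by linarith [mul_pos hB0 hsqrt])]
    field_simp
    rw [sq_sqrt hτ.le]
    ring
  rw [hwidth, mul_div_assoc 2 K τ, div_mul_eq_mul_div, div_le_div_iff₀ hsqrt (by positivity)]
  calc 2 * B * (B ^ 2 + K / τ) * (√τ * exp 1) = 2 * B * (B ^ 2 + K / τ) * exp 1 * √τ := by ring
    _ ≤ 8 * B ^ 3 * (3 + 2 * (K / τ)) * √τ := by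
        refine mul_le_mul_of_nonneg_right ?_ hsqrt.le
        nlinarith [mul_nonneg (mul_nonneg hk hB0.le) (by nlinarith : 0 ≤ B ^ 2 - 1),
          mul_nonneg (by positivity : 0 ≤ B * (B ^ 2 + K / τ)) (sub_nonneg.2 he.le)]

/-- Local L² growth bound for the score function of a normally perturbed variable:
`∫_{−B√τ}^{B√τ} ρ(u)² du ≤ (8B³/(√τ e))(3 + 2K/τ)`. -/
theorem stmt7 (μ : Measure ℝ) [IsProbabilityMeasure μ] (τ K : ℝ) (hτ : 0 < τ)
    (hint : Integrable (fun s => s) μ) (hint2 : Integrable (fun s => s ^ 2) μ)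
    (hmean : ∫ s, s ∂μ = 0) (hvar : ∫ s, s ^ 2 ∂μ ≤ K)
    (p p' : ℝ → ℝ)
    (hp : ∀ x, p x = ∫ s, gauss τ (x - s) ∂μ)
    (hp' : ∀ x, p' x = ∫ s, -((x - s) / τ) * gauss τ (x - s) ∂μ) :
    ∀ B : ℝ, 1 < B →
      ∫ u in (-(B * Real.sqrt τ))..(B * Real.sqrt τ), (p' u / p u) ^ 2
        ≤ 8 * B ^ 3 / (Real.sqrt τ * Real.exp 1) * (3 + 2 * K / τ) := by
  intro B hB
  have hK : 0 ≤ K := (integral_nonneg fun s => sq_nonneg s).trans hvar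
  have hscore : ∀ u ∈ Set.uIoc (-(B * √τ)) (B * √τ), ‖(p' u / p u) ^ 2‖ ≤ (B ^ 2 + K / τ) / τ := by
    intro u hu
    rw [Set.uIoc_of_le (by nlinarith [sqrt_nonneg τ]), Set.mem_Ioc] at hu
    have hu2 : u ^ 2 ≤ B ^ 2 * τ := by
      rw [← sq_sqrt hτ.le, ← mul_pow]
      exact sq_le_sq' hu.1.le hu.2
    rw [norm_of_nonneg (sq_nonneg _), hp, hp']
    refine score_sq_le hτ ?_ hint hint2 hmean ?_
    · nlinarith [div_nonneg hK hτ.le]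
    · rw [add_mul, div_mul_cancel₀ _ hτ.ne']
      linarith
  calc ∫ u in (-(B * √τ))..(B * √τ), (p' u / p u) ^ 2
      ≤ ‖∫ u in (-(B * √τ))..(B * √τ), (p' u / p u) ^ 2‖ := le_norm_self _
    _ ≤ (B ^ 2 + K / τ) / τ * |B * √τ - -(B * √τ)| :=
        intervalIntegral.norm_integral_le_of_norm_le_const hscore
    _ ≤ 8 * B ^ 3 / (√τ * exp 1) * (3 + 2 * K / τ) := score_bound_mul_width_le hτ hK hB
end

section
/- Lehman covariance identity and bound: if S, T are positive quadrant dependent random variables (i.e. H(s,t) = P(S ≥ s, T ≥ t) − P(S ≥ s)P(T ≥ t) ≥ 0 for all s,t), then for any continuously differentiable functions f, g with bounded derivatives, Cov(f(S), g(T)) = ∫∫ f'(s)g'(t)H(s,t) ds dt, and hence |Cov(f(S), g(T))| ≤ ‖f'‖_∞ ‖g'‖_∞ Cov(S,T). -/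
/-!
A C¹ function `h` with compact support is `h x = ∫ s in Iic x, h' s`, so by Fubini
`E[h(S) k(T)] = ∫∫ h'(s) k'(t) P(S ≥ s, T ≥ t)` and `E[h(S)] = ∫ h'(s) P(S ≥ s)`, which gives the
covariance identity for compactly supported `h, k`. General `f, g` are cut off as `f x * φ (x / R)`
with a bump `φ`: the cut-offs are dominated by `|f|`, their derivatives are bounded uniformly in
`R ≥ 1` because `f` grows at most linearly, and they agree with `f` near any point for large `R`;
dominated convergence lets `R → ∞`. The bound then follows from `H ≥ 0`.
-/

open MeasureTheory Set Filter Topology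

section StepKernel

variable {Ω E : Type*} [MeasurableSpace Ω] [MeasurableSpace E] [TopologicalSpace E]
  [OpensMeasurableSpace E] [PartialOrder E] [OrderClosedTopology E] [SecondCountableTopology E]
  (μ : Measure Ω) {ν : Measure E} {X : Ω → E} {u : E → ℝ}

lemma integrable_indicator_le_prod [IsFiniteMeasure μ] (hX : Measurable X) (hu : Integrable u ν) :
    Integrable ({p : Ω × E | p.2 ≤ X p.1}.indicator fun p => u p.2) (μ.prod ν) := by
  have hset : MeasurableSet {p : Ω × E | p.2 ≤ X p.1} :=
    measurableSet_le measurable_snd (hX.comp measurable_fst)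
  simpa using ((integrable_const (1 : ℝ)).mul_prod hu).indicator hset

lemma integral_indicator_le_apply (hX : Measurable X) (e : E) :
    ∫ ω, ({p : Ω × E | p.2 ≤ X p.1}.indicator (fun p => u p.2)) (ω, e) ∂μ
      = u e * μ.real {ω | e ≤ X ω} := by
  rw [mul_comm, ← smul_eq_mul, ← integral_indicator_const _ (measurableSet_le measurable_const hX)]
  rfl

variable [IsFiniteMeasure μ] [SFinite ν]

lemma integrable_mul_measureReal_le (hX : Measurable X) (hu : Integrable u ν) :
    Integrable (fun e => u e * μ.real {ω | e ≤ X ω}) ν := by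
  simpa only [integral_indicator_le_apply μ hX] using
    (integrable_indicator_le_prod μ hX hu).integral_prod_right

lemma integral_setIntegral_Iic_eq (hX : Measurable X) (hu : Integrable u ν) :
    ∫ ω, (∫ e in Iic (X ω), u e ∂ν) ∂μ = ∫ e, u e * μ.real {ω | e ≤ X ω} ∂ν := by
  have hslice : ∀ ω, ∫ e in Iic (X ω), u e ∂ν
      = ∫ e, ({p : Ω × E | p.2 ≤ X p.1}.indicator (fun p => u p.2)) (ω, e) ∂ν := fun ω => by
    rw [← integral_indicator measurableSet_Iic]; rfl
  simp_rw [hslice]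
  rw [integral_integral_swap (f := fun ω e => ({p : Ω × E | p.2 ≤ X p.1}.indicator
    (fun p => u p.2)) (ω, e)) (integrable_indicator_le_prod μ hX hu)]
  simp_rw [integral_indicator_le_apply μ hX]

end StepKernel

lemma HasCompactSupport.setIntegral_Iic_deriv {h : ℝ → ℝ} (hh : ContDiff ℝ 1 h)
    (hc : HasCompactSupport h) (x : ℝ) : ∫ s in Iic x, deriv h s = h x := by
  rw [integral_Iic_of_hasDerivAt_of_tendsto (m := 0) hh.continuous.continuousWithinAt
    (fun y _ => (hh.differentiable one_ne_zero y).hasDerivAt)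
    ((hh.continuous_deriv le_rfl).integrable_of_hasCompactSupport hc.deriv).integrableOn
    (hc.is_zero_at_infty.mono_left atBot_le_cocompact), sub_zero]

-- `H(s, t)` for `(S, T)` with joint law `μ`.
noncomputable def quadrantCov (μ : Measure (ℝ × ℝ)) (s t : ℝ) : ℝ :=
  μ.real {q | s ≤ q.1 ∧ t ≤ q.2} - μ.real {q | s ≤ q.1} * μ.real {q | t ≤ q.2}

lemma integral_mul_sub_eq_integral_deriv_mul_quadrantCov_of_hasCompactSupport
    (μ : Measure (ℝ × ℝ)) [IsFiniteMeasure μ] {h k : ℝ → ℝ}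
    (hh : ContDiff ℝ 1 h) (hk : ContDiff ℝ 1 k) (hhc : HasCompactSupport h)
    (hkc : HasCompactSupport k) :
    (∫ q, h q.1 * k q.2 ∂μ) - (∫ q, h q.1 ∂μ) * (∫ q, k q.2 ∂μ)
      = ∫ p : ℝ × ℝ, deriv h p.1 * deriv k p.2 * quadrantCov μ p.1 p.2 := by
  have hu : Integrable (deriv h) :=
    (hh.continuous_deriv le_rfl).integrable_of_hasCompactSupport hhc.deriv
  have hv : Integrable (deriv k) :=
    (hk.continuous_deriv le_rfl).integrable_of_hasCompactSupport hkc.deriv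
  have huv : Integrable (fun p : ℝ × ℝ => deriv h p.1 * deriv k p.2) := hu.mul_prod hv
  have joint : ∫ q, h q.1 * k q.2 ∂μ
      = ∫ p : ℝ × ℝ, deriv h p.1 * deriv k p.2 * μ.real {q | p ≤ q} := by
    rw [← integral_setIntegral_Iic_eq μ measurable_id' huv]
    refine integral_congr_ae (ae_of_all _ fun q => ?_)
    dsimp only
    rw [Iic_prod_eq, Measure.volume_eq_prod, ← Measure.prod_restrict, integral_prod_mul,
      hhc.setIntegral_Iic_deriv hh, hkc.setIntegral_Iic_deriv hk]
  have marginal_fst : ∫ q, h q.1 ∂μ = ∫ s, deriv h s * μ.real {q : ℝ × ℝ | s ≤ q.1} := by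
    simp_rw [← integral_setIntegral_Iic_eq μ measurable_fst hu, hhc.setIntegral_Iic_deriv hh]
  have marginal_snd : ∫ q, k q.2 ∂μ = ∫ t, deriv k t * μ.real {q : ℝ × ℝ | t ≤ q.2} := by
    simp_rw [← integral_setIntegral_Iic_eq μ measurable_snd hv, hkc.setIntegral_Iic_deriv hk]
  have marginals : (∫ s, deriv h s * μ.real {q : ℝ × ℝ | s ≤ q.1})
        * (∫ t, deriv k t * μ.real {q : ℝ × ℝ | t ≤ q.2})
      = ∫ p : ℝ × ℝ, deriv h p.1 * μ.real {q : ℝ × ℝ | p.1 ≤ q.1}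
          * (deriv k p.2 * μ.real {q : ℝ × ℝ | p.2 ≤ q.2}) :=
    (integral_prod_mul _ _).symm
  rw [joint, marginal_fst, marginal_snd, marginals,
    ← integral_sub (integrable_mul_measureReal_le μ measurable_id' huv)
      ((integrable_mul_measureReal_le μ measurable_fst hu).mul_prod
        (integrable_mul_measureReal_le μ measurable_snd hv))]
  refine integral_congr_ae (ae_of_all _ fun p => ?_)
  simp only [quadrantCov, Prod.le_def]
  ring

noncomputable def cutoff (φ : ContDiffBump (0 : ℝ)) (R : ℝ) (f : ℝ → ℝ) (x : ℝ) : ℝ :=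
  f x * φ (x / R)

lemma ContDiffBump.abs_le_one (φ : ContDiffBump (0 : ℝ)) (x : ℝ) : |φ x| ≤ 1 :=
  abs_le.mpr ⟨by linarith [φ.nonneg (x := x)], φ.le_one⟩

section Cutoff

variable {φ : ContDiffBump (0 : ℝ)} {R : ℝ} {f : ℝ → ℝ}

lemma contDiff_cutoff {n : ℕ∞} (hf : ContDiff ℝ n f) : ContDiff ℝ n (cutoff φ R f) :=
  hf.mul (φ.contDiff.comp (contDiff_id.div_const R))

lemma hasCompactSupport_cutoff (hR : R ≠ 0) : HasCompactSupport (cutoff φ R f) := by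
  have : HasCompactSupport fun x : ℝ => φ (R⁻¹ • x) :=
    φ.hasCompactSupport.comp_smul (inv_ne_zero hR)
  have hcutoff : cutoff φ R f = f * fun x => φ (R⁻¹ • x) := by
    funext x
    simp only [cutoff, Pi.mul_apply, smul_eq_mul, inv_mul_eq_div]
  rw [hcutoff]
  exact this.mul_left

lemma abs_cutoff_le (x : ℝ) : |cutoff φ R f x| ≤ |f x| := by
  rw [cutoff, abs_mul]
  exact mul_le_of_le_one_right (abs_nonneg _) (φ.abs_le_one _)

lemma eventually_cutoff_eventuallyEq (x : ℝ) : ∀ᶠ R in atTop, cutoff φ R f =ᶠ[𝓝 x] f := by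
  filter_upwards [eventually_gt_atTop 0, eventually_gt_atTop (|x| / φ.rIn)] with R hR hxR
  have hx : |x| < φ.rIn * R := by rwa [div_lt_iff₀ φ.rIn_pos, mul_comm] at hxR
  filter_upwards [(isOpen_lt continuous_abs continuous_const).mem_nhds hx] with y hy
  have : y / R ∈ Metric.closedBall (0 : ℝ) φ.rIn := by
    rw [mem_closedBall_zero_iff, Real.norm_eq_abs, abs_div, abs_of_pos hR, div_le_iff₀ hR]
    exact hy.le
  rw [cutoff, φ.one_of_mem_closedBall this, mul_one]

lemma hasDerivAt_cutoff {x : ℝ} (hf : DifferentiableAt ℝ f x) :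
    HasDerivAt (cutoff φ R f) (deriv f x * φ (x / R) + f x * (deriv φ (x / R) / R)) x := by
  have hφ : HasDerivAt φ (deriv φ (x / R)) (x / R) :=
    ((φ.contDiff (n := 1)).differentiable one_ne_zero _).hasDerivAt
  have hφR : HasDerivAt (fun y => φ (y / R)) (deriv φ (x / R) * (1 / R)) x :=
    HasDerivAt.comp (h₂ := (φ : ℝ → ℝ)) x hφ ((hasDerivAt_id x).div_const R)
  have h := hf.hasDerivAt.mul hφR
  rw [mul_one_div] at h
  exact h

lemma exists_abs_deriv_cutoff_le {C : ℝ} (hf : Differentiable ℝ f)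
    (hC : ∀ x, |deriv f x| ≤ C) : ∃ M, ∀ R ≥ 1, ∀ x, |deriv (cutoff φ R f) x| ≤ M := by
  obtain ⟨D, hD⟩ := ((φ.contDiff (n := 1)).continuous_deriv
    le_rfl).bounded_above_of_compact_support φ.hasCompactSupport.deriv
  simp only [Real.norm_eq_abs] at hD
  have hC0 : 0 ≤ C := (abs_nonneg _).trans (hC 0)
  have hD0 : 0 ≤ D := (abs_nonneg _).trans (hD 0)
  have growth : ∀ x, |f x| ≤ |f 0| + C * |x| := fun x => by
    have := convex_univ.norm_image_sub_le_of_norm_deriv_le (fun y _ => hf y)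
      (fun y _ => hC y) (mem_univ 0) (mem_univ x)
    simp only [Real.norm_eq_abs, sub_zero] at this
    linarith [abs_sub_abs_le_abs_sub (f x) (f 0)]
  refine ⟨C + (|f 0| + φ.rOut * C) * D, fun R hR x => ?_⟩
  have hR0 : 0 < R := by linarith
  rw [(hasDerivAt_cutoff (hf x)).deriv]
  have bump_term : |deriv f x * φ (x / R)| ≤ C := by
    rw [abs_mul]
    exact (mul_le_of_le_one_right (abs_nonneg _) (φ.abs_le_one _)).trans (hC x)
  have slope_term : |f x * (deriv φ (x / R) / R)| ≤ (|f 0| + φ.rOut * C) * D := by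
    by_cases h0 : deriv φ (x / R) = 0
    · rw [h0, zero_div, mul_zero, abs_zero]
      exact mul_nonneg (add_nonneg (abs_nonneg _) (mul_nonneg φ.rOut_pos.le hC0)) hD0
    have hx : |x| ≤ φ.rOut * R := by
      have hmem : x / R ∈ tsupport φ := support_deriv_subset h0
      rwa [φ.tsupport_eq, mem_closedBall_zero_iff, Real.norm_eq_abs, abs_div, abs_of_pos hR0,
        div_le_iff₀ hR0] at hmem
    have hfx : |f x| ≤ (|f 0| + φ.rOut * C) * R := by
      nlinarith [growth x, abs_nonneg (f 0), mul_le_mul_of_nonneg_left hx hC0]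
    calc |f x * (deriv φ (x / R) / R)| = |f x| / R * |deriv φ (x / R)| := by
          rw [abs_mul, abs_div, abs_of_pos hR0]; ring
      _ ≤ (|f 0| + φ.rOut * C) * D :=
          mul_le_mul ((div_le_iff₀ hR0).2 hfx) (hD _) (abs_nonneg _)
            (add_nonneg (abs_nonneg _) (mul_nonneg φ.rOut_pos.le hC0))
  exact (abs_add_le _ _).trans (add_le_add bump_term slope_term)

end Cutoff

lemma tendsto_integral_of_eventuallyEq_of_abs_le {α ι : Type*} [MeasurableSpace α]
    {μ : Measure α} {l : Filter ι} [l.IsCountablyGenerated] {F : ι → α → ℝ} {f bound : α → ℝ}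
    (hF : ∀ᶠ i in l, AEStronglyMeasurable (F i) μ) (hbound : Integrable bound μ)
    (hle : ∀ᶠ i in l, ∀ a, |F i a| ≤ bound a) (hlim : ∀ a, ∀ᶠ i in l, F i a = f a) :
    Tendsto (fun i => ∫ a, F i a ∂μ) l (𝓝 (∫ a, f a ∂μ)) :=
  tendsto_integral_filter_of_dominated_convergence bound hF (hle.mono fun _ h => ae_of_all _ h)
    hbound (ae_of_all _ fun a => tendsto_const_nhds.congr' (EventuallyEq.symm (hlim a)))

lemma integral_mul_sub_eq_integral_deriv_mul_quadrantCov (μ : Measure (ℝ × ℝ))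
    [IsFiniteMeasure μ] {f g : ℝ → ℝ} {Cf Cg : ℝ} (hf : ContDiff ℝ 1 f) (hg : ContDiff ℝ 1 g)
    (hCf : ∀ s, |deriv f s| ≤ Cf) (hCg : ∀ t, |deriv g t| ≤ Cg)
    (hHint : Integrable (fun p : ℝ × ℝ => quadrantCov μ p.1 p.2))
    (hfg : Integrable (fun q : ℝ × ℝ => f q.1 * g q.2) μ)
    (hfi : Integrable (fun q : ℝ × ℝ => f q.1) μ) (hgi : Integrable (fun q : ℝ × ℝ => g q.2) μ) :
    (∫ q, f q.1 * g q.2 ∂μ) - (∫ q, f q.1 ∂μ) * (∫ q, g q.2 ∂μ)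
      = ∫ p : ℝ × ℝ, deriv f p.1 * deriv g p.2 * quadrantCov μ p.1 p.2 := by
  let φ : ContDiffBump (0 : ℝ) := default
  obtain ⟨Mf, hMf⟩ := exists_abs_deriv_cutoff_le (φ := φ) (hf.differentiable one_ne_zero) hCf
  obtain ⟨Mg, hMg⟩ := exists_abs_deriv_cutoff_le (φ := φ) (hg.differentiable one_ne_zero) hCg
  have hcompact : ∀ᶠ R in atTop,
      (∫ q, cutoff φ R f q.1 * cutoff φ R g q.2 ∂μ)
          - (∫ q, cutoff φ R f q.1 ∂μ) * (∫ q, cutoff φ R g q.2 ∂μ)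
        = ∫ p : ℝ × ℝ, deriv (cutoff φ R f) p.1 * deriv (cutoff φ R g) p.2
            * quadrantCov μ p.1 p.2 := by
    filter_upwards [eventually_gt_atTop 0] with R hR
    exact integral_mul_sub_eq_integral_deriv_mul_quadrantCov_of_hasCompactSupport μ
      (contDiff_cutoff hf) (contDiff_cutoff hg) (hasCompactSupport_cutoff hR.ne')
      (hasCompactSupport_cutoff hR.ne')
  refine tendsto_nhds_unique ((Tendsto.sub ?_ (Tendsto.mul ?_ ?_)).congr' hcompact) ?_
  · refine tendsto_integral_of_eventuallyEq_of_abs_le (.of_forall fun R =>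
      (((contDiff_cutoff hf).continuous.comp continuous_fst).mul
        ((contDiff_cutoff hg).continuous.comp continuous_snd)).aestronglyMeasurable)
      hfg.abs (.of_forall fun R q => ?_) fun q => ?_
    · rw [abs_mul, abs_mul]
      exact mul_le_mul (abs_cutoff_le _) (abs_cutoff_le _) (abs_nonneg _) (abs_nonneg _)
    · filter_upwards [eventually_cutoff_eventuallyEq q.1, eventually_cutoff_eventuallyEq q.2]
        with R h1 h2
      rw [h1.eq_of_nhds, h2.eq_of_nhds]
  · exact tendsto_integral_of_eventuallyEq_of_abs_le (.of_forall fun R =>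
      ((contDiff_cutoff hf).continuous.comp continuous_fst).aestronglyMeasurable)
      hfi.abs (.of_forall fun R q => abs_cutoff_le _)
      fun q => (eventually_cutoff_eventuallyEq q.1).mono fun _ h => h.eq_of_nhds
  · exact tendsto_integral_of_eventuallyEq_of_abs_le (.of_forall fun R =>
      ((contDiff_cutoff hg).continuous.comp continuous_snd).aestronglyMeasurable)
      hgi.abs (.of_forall fun R q => abs_cutoff_le _)
      fun q => (eventually_cutoff_eventuallyEq q.2).mono fun _ h => h.eq_of_nhds
  · have hderiv : ∀ R, Continuous fun p : ℝ × ℝ =>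
        deriv (cutoff φ R f) p.1 * deriv (cutoff φ R g) p.2 :=
      fun R => (((contDiff_cutoff hf).continuous_deriv le_rfl).comp continuous_fst).mul
        (((contDiff_cutoff hg).continuous_deriv le_rfl).comp continuous_snd)
    refine tendsto_integral_of_eventuallyEq_of_abs_le (.of_forall fun R =>
      (hderiv R).aestronglyMeasurable.mul hHint.aestronglyMeasurable)
      (hHint.abs.const_mul (Mf * Mg)) ?_ fun p => ?_
    · filter_upwards [eventually_ge_atTop 1] with R hR p
      rw [abs_mul, abs_mul]
      have hMf0 : 0 ≤ Mf := (abs_nonneg _).trans (hMf R hR 0)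
      exact mul_le_mul_of_nonneg_right
        (mul_le_mul (hMf R hR _) (hMg R hR _) (abs_nonneg _) hMf0) (abs_nonneg _)
    · filter_upwards [eventually_cutoff_eventuallyEq p.1, eventually_cutoff_eventuallyEq p.2]
        with R h1 h2
      rw [h1.deriv_eq, h2.deriv_eq]

/-- Lehman covariance identity and bound for positive quadrant dependent
random variables (with joint law `μ`): `Cov(f(S), g(T)) = ∫∫ f'(s)g'(t)H(s,t) ds dt`
and `|Cov(f(S), g(T))| ≤ ‖f'‖_∞ ‖g'‖_∞ ∫∫ H` (Hoeffding: `Cov(S,T) = ∫∫ H`). -/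
theorem stmt9 (μ : Measure (ℝ × ℝ)) [IsProbabilityMeasure μ]
    (H : ℝ → ℝ → ℝ)
    (hH : ∀ s t, H s t = (μ {q | s ≤ q.1 ∧ t ≤ q.2}).toReal
      - (μ {q | s ≤ q.1}).toReal * (μ {q | t ≤ q.2}).toReal)
    (hPQD : ∀ s t, 0 ≤ H s t)
    (hHint : Integrable (fun q : ℝ × ℝ => H q.1 q.2))
    (f g : ℝ → ℝ) (hf : ContDiff ℝ 1 f) (hg : ContDiff ℝ 1 g)
    (Cf Cg : ℝ) (hCf : ∀ s, |deriv f s| ≤ Cf) (hCg : ∀ t, |deriv g t| ≤ Cg)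
    (hfg : Integrable (fun q : ℝ × ℝ => f q.1 * g q.2) μ)
    (hfi : Integrable (fun q : ℝ × ℝ => f q.1) μ)
    (hgi : Integrable (fun q : ℝ × ℝ => g q.2) μ)
    (hprod : Integrable (fun q : ℝ × ℝ => deriv f q.1 * deriv g q.2 * H q.1 q.2)) :
    (∫ q, f q.1 * g q.2 ∂μ) - (∫ q, f q.1 ∂μ) * (∫ q, g q.2 ∂μ)
        = ∫ s, ∫ t, deriv f s * deriv g t * H s t ∧
      |(∫ q, f q.1 * g q.2 ∂μ) - (∫ q, f q.1 ∂μ) * (∫ q, g q.2 ∂μ)|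
        ≤ Cf * Cg * ∫ s, ∫ t, H s t := by
  obtain rfl : H = quadrantCov μ := funext fun s => funext fun t => hH s t
  have hcov := integral_mul_sub_eq_integral_deriv_mul_quadrantCov μ hf hg hCf hCg hHint hfg hfi hgi
  refine ⟨hcov.trans (integral_prod _ hprod), ?_⟩
  rw [hcov, ← integral_prod _ hHint, ← integral_const_mul]
  have hCf0 : 0 ≤ Cf := (abs_nonneg _).trans (hCf 0)
  refine abs_integral_le_integral_abs.trans
    (integral_mono hprod.abs (hHint.const_mul _) fun p => ?_)
  rw [abs_mul, abs_mul, abs_of_nonneg (hPQD p.1 p.2)]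
  exact mul_le_mul_of_nonneg_right (mul_le_mul (hCf _) (hCg _) (abs_nonneg _) hCf0) (hPQD _ _)
end

section
/- Linnik-type telescoping argument: let (J(k))_{k≥0}, (d(k))_{k≥0}, (D(k))_{k≥0} be sequences of nonnegative reals with J(k+1) ≤ J(k) + d(k) − D(k) for all k and d(k) → 0, and suppose that J(k) ≤ 4ν(D(k)) for all k, where ν : [0,∞) → [0,∞) is increasing and continuous with ν(0) = 0. Then J(k) → 0 as k → ∞. -/
open Filter

/-- Linnik-type telescoping argument: if `J(k+1) ≤ J(k) + d(k) − D(k)`,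
`d(k) → 0`, and `J(k) ≤ 4ν(D(k))` for a continuous strictly increasing
`ν` with `ν(0) = 0`, then `J(k) → 0`. -/
theorem stmt16 (J d D : ℕ → ℝ) (ν : ℝ → ℝ)
    (hJ0 : ∀ k, 0 ≤ J k) (hd0 : ∀ k, 0 ≤ d k) (hD0 : ∀ k, 0 ≤ D k)
    (hrec : ∀ k, J (k + 1) ≤ J k + d k - D k)
    (hd : Tendsto d atTop (nhds 0))
    (hνc : Continuous ν) (hνm : StrictMonoOn ν (Set.Ici 0)) (hν0 : ν 0 = 0)
    (hνnn : ∀ x, 0 ≤ x → 0 ≤ ν x)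
    (hdom : ∀ k, J k ≤ 4 * ν (D k)) :
    Tendsto J atTop (nhds 0) := by
  rw [Metric.tendsto_atTop]
  intro ε hε
  -- continuity of ν at 0
  have hcont := Metric.continuousAt_iff.mp (hνc.continuousAt (x := 0))
  obtain ⟨δ, hδpos, hδ⟩ := hcont (ε / 8) (by linarith)
  -- eventually d small
  have hdsmall : ∃ N, ∀ k ≥ N, d k < min (δ / 2) (ε / 2) := by
    have := (Metric.tendsto_atTop.mp hd) (min (δ / 2) (ε / 2))
      (lt_min (by linarith) (by linarith))
    obtain ⟨N, hN⟩ := this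
    exact ⟨N, fun k hk => by
      have := hN k hk
      rw [Real.dist_eq, sub_zero, abs_of_nonneg (hd0 k)] at this
      exact this⟩
  obtain ⟨N, hN⟩ := hdsmall
  -- key: D k < δ implies J k < ε/2
  have hsmall : ∀ k, D k < δ → J k < ε / 2 := by
    intro k hk
    have hdist : dist (D k) 0 < δ := by
      rw [Real.dist_eq, sub_zero, abs_of_nonneg (hD0 k)]; exact hk
    have := hδ hdist
    rw [hν0, Real.dist_eq, sub_zero, abs_of_nonneg (hνnn _ (hD0 k))] at this
    have := hdom k
    linarith
  -- Step 1: there exists K ≥ N with D K < δ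
  have hK : ∃ K ≥ N, D K < δ := by
    by_contra h
    push_neg at h
    have hdec : ∀ m : ℕ, J (N + m) ≤ J N - m * (δ / 2) := by
      intro m
      induction m with
      | zero => simp
      | succ m ih =>
        have hk : N + m ≥ N := Nat.le_add_right _ _
        have h1 := hrec (N + m)
        have h2 : δ ≤ D (N + m) := h (N + m) hk
        have h3 : d (N + m) < δ / 2 := lt_of_lt_of_le (hN _ hk) (min_le_left _ _)
        have : J (N + (m + 1)) ≤ J (N + m) - δ / 2 := by
          have : N + (m + 1) = (N + m) + 1 := by ring
          rw [this]; linarith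
        push_cast
        linarith [ih]
    obtain ⟨m, hm⟩ := exists_nat_gt (J N / (δ / 2))
    have hmpos : J N < m * (δ / 2) := by
      rw [div_lt_iff₀ (by linarith)] at hm
      linarith
    have := hdec m
    have := hJ0 (N + m)
    linarith
  obtain ⟨K, hKN, hDK⟩ := hK
  -- Step 2: for all m, J (K + m) < ε
  have hstep : ∀ m : ℕ, J (K + m) < ε := by
    intro m
    induction m with
    | zero => simpa using lt_of_lt_of_le (hsmall K hDK) (by linarith)
    | succ m ih =>
      have hk : K + m ≥ N := le_trans hKN (Nat.le_add_right _ _)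
      have h1 := hrec (K + m)
      have heq : K + (m + 1) = (K + m) + 1 := by ring
      rw [heq]
      rcases le_or_gt (d (K + m)) (D (K + m)) with hcase | hcase
      · linarith
      · have hdδ : d (K + m) < δ / 2 := lt_of_lt_of_le (hN _ hk) (min_le_left _ _)
        have hDδ : D (K + m) < δ := by linarith
        have hJε2 : J (K + m) < ε / 2 := hsmall _ hDδ
        have hdε2 : d (K + m) < ε / 2 := lt_of_lt_of_le (hN _ hk) (min_le_right _ _)
        have := hD0 (K + m)
        linarith
  refine ⟨K, fun n hn => ?_⟩
  rw [Real.dist_eq, sub_zero, abs_of_nonneg (hJ0 n)]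
  have : n = K + (n - K) := by omega
  rw [this]
  exact hstep _
end
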